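/- Let X_1,...,X_n be i.i.d. Poisson(1), S_m = Σ_{j≤m}(X_j − 1), τ_{−1} the first hitting time of −1, and let f: ℕ × ℕ* → [0,∞) satisfy f(0,m) = 0 for all m. Then for indices 1 ≤ i_1 < ... < i_k ≤ n and 1 ≤ j_1 < ... < j_k ≤ n with j_r ≤ i_r for all r, and integers m_1,...,m_k ≥ 1: E[f(X_{i_1},m_1)⋯f(X_{i_k},m_k) · 1_{τ_{−1}=n+1}] ≤ E[f(X_{j_1},m_1)⋯f(X_{j_k},m_k) · 1_{τ_{−1}=n+1}]. -/

import Mathlib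

/-!
Transposing the steps `b` and `b + 1` of an i.i.d. sequence does not change its law, and it
changes the walk only at time `b`. If the transposed walk first hits `-1` at time `n + 1`, so does
the original one unless `X_b = 0`, and in that case the product with the index `b + 1` lowered
to `b` vanishes since `f(0, ·) = 0`. So lowering one index by one, to a free slot, can only
increase the expectation. From `i` one reaches `j` by such moves, each time lowering the first
index `r` with `j_r < i_r`.
-/

open MeasureTheory ProbabilityTheory Finset
open scoped ENNReal

theorem ProbabilityTheory.iIndepFun.map_comp_perm {Ω ι β : Type*} [MeasurableSpace Ω]
    [MeasurableSpace β] {μ : Measure Ω} {X : ι → Ω → β} (hmeas : ∀ i, Measurable (X i))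
    (hindep : iIndepFun X μ) {ν : Measure β} (hdist : ∀ i, μ.map (X i) = ν)
    (σ : Equiv.Perm ι) :
    (μ.map fun ω i => X i ω).map (fun y => y ∘ σ) = μ.map fun ω i => X i ω := by
  rw [Measure.map_map (measurable_pi_lambda _ fun i => measurable_pi_apply (σ i) :
    Measurable fun y : ι → β => y ∘ σ) (measurable_pi_lambda _ hmeas)]
  change μ.map (fun ω i => X (σ i) ω) = _
  rw [(hindep.precomp σ.injective).map_fun_eq_infinitePi_map (fun i => hmeas _),
    hindep.map_fun_eq_infinitePi_map hmeas]
  simp only [hdist]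

theorem StrictMono.update_of_lt_of_lt {α β : Type*} [Preorder α] [DecidableEq α] [Preorder β]
    {f : α → β} (hf : StrictMono f) {a : α} {b : β} (hlt : ∀ x < a, f x < b)
    (hgt : ∀ x, a < x → b < f x) : StrictMono (Function.update f a b) := by
  intro x y hxy
  rcases eq_or_ne x a with rfl | hx
  · simpa [hxy.ne'] using hgt y hxy
  rcases eq_or_ne y a with rfl | hy
  · simpa [hx] using hlt x hxy
  · simpa [hx, hy] using hf hxy

theorem StrictMono.exists_decrement_ge {α : Type*} [LinearOrder α] [WellFoundedLT α]
    {i j : α → ℕ} (hi : StrictMono i) (hj : StrictMono j) (hj1 : ∀ r, 1 ≤ j r) (hji : j < i) :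
    ∃ a b, 1 ≤ b ∧ i a = b + 1 ∧ StrictMono (Function.update i a b) ∧
      j ≤ Function.update i a b := by
  obtain ⟨a, hja : j a < i a, hmin⟩ :=
    wellFounded_lt.has_min {r | j r < i r} (Pi.lt_def.1 hji).2
  have heq : ∀ r < a, i r = j r := fun r hr =>
    ((hji.le r).eq_or_lt.resolve_right fun h => hmin r h hr).symm
  refine ⟨a, i a - 1, by have := hj1 a; omega, by omega, ?_, fun r => ?_⟩
  · refine hi.update_of_lt_of_lt (fun r hr => ?_) (fun r hr => ?_)
    · have := hj hr
      rw [heq r hr]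
      omega
    · have := hi hr
      omega
  · rcases eq_or_ne r a with rfl | hr
    · simp only [Function.update_self]
      omega
    · simpa [hr] using hji.le r

namespace SkipFreeWalk

def walk (y : ℕ → ℕ) (m : ℕ) : ℤ := ∑ u ∈ Icc 1 m, ((y u : ℤ) - 1)

noncomputable def hittingTime (y : ℕ → ℕ) : ℕ := sInf {m | 1 ≤ m ∧ walk y m = -1}

lemma walk_zero (y : ℕ → ℕ) : walk y 0 = 0 := by simp [walk]

lemma walk_succ (y : ℕ → ℕ) (m : ℕ) : walk y (m + 1) = walk y m + ((y (m + 1) : ℤ) - 1) :=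
  sum_Icc_succ_top (by omega) _

lemma measurable_walk (m : ℕ) : Measurable fun y : ℕ → ℕ => walk y m := by
  unfold walk
  fun_prop

lemma walk_nonneg_of_lt_hittingTime {y : ℕ → ℕ} {m : ℕ} (hm : m < hittingTime y) :
    0 ≤ walk y m := by
  induction m with
  | zero => simp [walk_zero]
  | succ m ih =>
    have hne : walk y (m + 1) ≠ -1 := fun h => Nat.notMem_of_lt_sInf hm ⟨by omega, h⟩
    have := ih (by omega)
    rw [walk_succ] at hne ⊢
    omega

lemma hittingTime_eq_succ_iff {y : ℕ → ℕ} {t : ℕ} :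
    hittingTime y = t + 1 ↔ walk y (t + 1) = -1 ∧ ∀ m ∈ Icc 1 t, walk y m ≠ -1 := by
  constructor
  · intro h
    have hmem := Nat.sInf_mem (Nat.nonempty_of_pos_sInf (h ▸ t.succ_pos : 0 < hittingTime y))
    refine ⟨h ▸ hmem.2, fun m hm hwalk => ?_⟩
    have : hittingTime y ≤ m := Nat.sInf_le ⟨(mem_Icc.1 hm).1, hwalk⟩
    have := (mem_Icc.1 hm).2
    omega
  · rintro ⟨hhit, hbefore⟩
    have hmem : t + 1 ∈ {m | 1 ≤ m ∧ walk y m = -1} := ⟨by omega, hhit⟩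
    refine le_antisymm (Nat.sInf_le hmem) (not_lt.1 fun hlt => ?_)
    obtain ⟨hpos, hwalk⟩ := Nat.sInf_mem ⟨_, hmem⟩
    exact hbefore _ (mem_Icc.2 ⟨hpos, Nat.lt_succ_iff.1 hlt⟩) hwalk

lemma measurableSet_hittingTime_eq_succ (t : ℕ) :
    MeasurableSet {y : ℕ → ℕ | hittingTime y = t + 1} := by
  simp only [hittingTime_eq_succ_iff, Set.ofPred_and, Set.ofPred_forall]
  exact (measurable_walk _ (measurableSet_singleton _)).inter <|
    .iInter fun m => .iInter fun _ => (measurable_walk m (measurableSet_singleton _)).compl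

lemma walk_comp_swap {b m : ℕ} (hb : 1 ≤ b) (hm : m ≠ b) (y : ℕ → ℕ) :
    walk (y ∘ Equiv.swap b (b + 1)) m = walk y m := by
  rcases hm.lt_or_gt with hm | hm
  · refine sum_congr rfl fun u hu => ?_
    have := (mem_Icc.1 hu).2
    rw [Function.comp_apply, Equiv.swap_apply_of_ne_of_ne (by omega) (by omega)]
  · refine Equiv.Perm.sum_comp _ _ (fun u => ((y u : ℤ) - 1)) fun u hu => ?_
    have : u = b ∨ u = b + 1 := by
      by_contra! h
      exact hu (Equiv.swap_apply_of_ne_of_ne h.1 h.2)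
    rw [mem_coe, mem_Icc]
    omega

lemma hittingTime_of_comp_swap {y : ℕ → ℕ} {b t : ℕ} (hb : 1 ≤ b) (hbt : b ≤ t) (hyb : y b ≠ 0)
    (h : hittingTime (y ∘ Equiv.swap b (b + 1)) = t + 1) : hittingTime y = t + 1 := by
  obtain ⟨hhit, hbefore⟩ := hittingTime_eq_succ_iff.1 h
  refine hittingTime_eq_succ_iff.2 ⟨walk_comp_swap hb (m := t + 1) (by omega) y ▸ hhit,
    fun m hm => ?_⟩
  rcases eq_or_ne m b with rfl | hmb
  · -- at time `b` the walk is `walk y (b - 1) + (y b - 1)`, both summands nonnegative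
    obtain ⟨c, rfl⟩ : ∃ c, m = c + 1 := ⟨m - 1, by omega⟩
    have hc : 0 ≤ walk y c :=
      walk_comp_swap hb (m := c) (by omega) y ▸ walk_nonneg_of_lt_hittingTime (by omega)
    rw [walk_succ]
    omega
  · exact walk_comp_swap hb hmb y ▸ hbefore m hm

variable {k t : ℕ} {g : Fin k → ℕ → ℝ}

/-- The integrand `∏ r, f (X (i r)) (m r) * 1_{τ = t + 1}` as a function of the path `y = X`,
with `g r = f · (m r)`. -/
noncomputable def hitProduct (t : ℕ) (g : Fin k → ℕ → ℝ) (i : Fin k → ℕ) : (ℕ → ℕ) → ℝ≥0∞ :=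
  {y | hittingTime y = t + 1}.indicator fun y => ENNReal.ofReal (∏ r, g r (y (i r)))

lemma measurable_hitProduct {i : Fin k → ℕ} : Measurable (hitProduct t g i) :=
  (Measurable.ennreal_ofReal <| by fun_prop).indicator (measurableSet_hittingTime_eq_succ t)

lemma hitProduct_comp_swap_le (hg0 : ∀ r, g r 0 = 0) {i : Fin k → ℕ} {r₀ : Fin k} {b : ℕ}
    (hb : 1 ≤ b) (hbt : b ≤ t) (hib : i r₀ = b + 1)
    (hother : ∀ r ≠ r₀, i r ≠ b ∧ i r ≠ b + 1) (y : ℕ → ℕ) :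
    hitProduct t g i (y ∘ Equiv.swap b (b + 1)) ≤ hitProduct t g (Function.update i r₀ b) y := by
  have hprod : ∏ r, g r ((y ∘ Equiv.swap b (b + 1)) (i r)) =
      ∏ r, g r (y (Function.update i r₀ b r)) := prod_congr rfl fun r _ => by
    rcases eq_or_ne r r₀ with rfl | hr
    · simp [hib]
    · simp [hr, Equiv.swap_apply_of_ne_of_ne (hother r hr).1 (hother r hr).2]
  by_cases hz : hittingTime (y ∘ Equiv.swap b (b + 1)) = t + 1
  · rw [hitProduct, Set.indicator_of_mem (s := {y | hittingTime y = t + 1}) hz, hprod]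
    by_cases hyb : y b = 0
    · have hzero : ∏ r, g r (y (Function.update i r₀ b r)) = 0 :=
        prod_eq_zero (mem_univ r₀) (by simp [hyb, hg0])
      simp [hzero]
    · rw [hitProduct, Set.indicator_of_mem (s := {y | hittingTime y = t + 1})
        (hittingTime_of_comp_swap hb hbt hyb hz)]
  · simp [hitProduct, hz]

lemma lintegral_hitProduct_le_update {ν : Measure (ℕ → ℕ)}
    (hν : ∀ σ : Equiv.Perm ℕ, ν.map (fun y => y ∘ σ) = ν) (hg0 : ∀ r, g r 0 = 0)
    {i : Fin k → ℕ} {r₀ : Fin k} {b : ℕ} (hb : 1 ≤ b) (hbt : b ≤ t) (hib : i r₀ = b + 1)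
    (hother : ∀ r ≠ r₀, i r ≠ b ∧ i r ≠ b + 1) :
    ∫⁻ y, hitProduct t g i y ∂ν ≤ ∫⁻ y, hitProduct t g (Function.update i r₀ b) y ∂ν :=
  calc ∫⁻ y, hitProduct t g i y ∂ν
      = ∫⁻ y, hitProduct t g i (y ∘ Equiv.swap b (b + 1)) ∂ν := by
        conv_lhs => rw [← hν (Equiv.swap b (b + 1))]
        exact lintegral_map measurable_hitProduct
          (measurable_pi_lambda _ fun u => measurable_pi_apply _)
    _ ≤ _ := lintegral_mono (hitProduct_comp_swap_le hg0 hb hbt hib hother)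

theorem lintegral_hitProduct_antitone {ν : Measure (ℕ → ℕ)}
    (hν : ∀ σ : Equiv.Perm ℕ, ν.map (fun y => y ∘ σ) = ν) (hg0 : ∀ r, g r 0 = 0)
    {i j : Fin k → ℕ} (hi : StrictMono i) (hj : StrictMono j) (hj1 : ∀ r, 1 ≤ j r)
    (hit : ∀ r, i r ≤ t + 1) (hji : j ≤ i) :
    ∫⁻ y, hitProduct t g i y ∂ν ≤ ∫⁻ y, hitProduct t g j y ∂ν := by
  induction i using WellFoundedLT.induction with
  | _ i ih =>
  obtain rfl | hlt := hji.eq_or_lt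
  · exact le_rfl
  obtain ⟨r₀, b, hb, hib, hi', hji'⟩ := hi.exists_decrement_ge hj hj1 hlt
  have hother : ∀ r ≠ r₀, i r ≠ b ∧ i r ≠ b + 1 := fun r hr =>
    ⟨by simpa [hr] using hi'.injective.ne hr, hib ▸ hi.injective.ne hr⟩
  have hdec : Function.update i r₀ b < i := update_lt_self_iff.2 (by omega)
  calc ∫⁻ y, hitProduct t g i y ∂ν
      ≤ ∫⁻ y, hitProduct t g (Function.update i r₀ b) y ∂ν :=
        lintegral_hitProduct_le_update hν hg0 hb (by have := hit r₀; omega) hib hother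
    _ ≤ _ := ih _ hdec hi' (fun r => (hdec.le r).trans (hit r)) hji'

end SkipFreeWalk

open SkipFreeWalk in
theorem conditioned_walk_step_decrease_general
    {Ω : Type*} [MeasurableSpace Ω] (μ : Measure Ω)
    (X : ℕ → Ω → ℕ) (hmeas : ∀ i, Measurable (X i))
    (hindep : iIndepFun X μ)
    (hdist : ∀ i, Measure.map (X i) μ = poissonMeasure 1)
    (S : ℕ → Ω → ℤ) (hS : ∀ m ω, S m ω = ∑ j ∈ Finset.Icc 1 m, ((X j ω : ℤ) - 1))
    (τ : Ω → ℕ) (hτ : ∀ ω, τ ω = sInf {m | 1 ≤ m ∧ S m ω = -1})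
    (f : ℕ → ℕ → ℝ) (hf0 : ∀ m, 1 ≤ m → f 0 m = 0)
    (n k : ℕ)
    (i j : Fin k → ℕ) (hi_mono : StrictMono i) (hj_mono : StrictMono j)
    (hi_range : ∀ r, i r ∈ Finset.Icc 1 n) (hj_range : ∀ r, j r ∈ Finset.Icc 1 n)
    (hji : ∀ r, j r ≤ i r)
    (m : Fin k → ℕ) (hm : ∀ r, 1 ≤ m r) :
    ∫⁻ ω in {ω | τ ω = n + 1}, ENNReal.ofReal (∏ r, f (X (i r) ω) (m r)) ∂μ ≤
      ∫⁻ ω in {ω | τ ω = n + 1}, ENNReal.ofReal (∏ r, f (X (j r) ω) (m r)) ∂μ := by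
  have hX : Measurable fun ω u => X u ω := measurable_pi_lambda _ hmeas
  have hτX : ∀ ω, τ ω = hittingTime fun u => X u ω := fun ω => by
    simp only [hτ, hS, hittingTime, walk]
  have hlaw : ∀ l : Fin k → ℕ,
      ∫⁻ ω in {ω | τ ω = n + 1}, ENNReal.ofReal (∏ r, f (X (l r) ω) (m r)) ∂μ =
        ∫⁻ y, hitProduct n (fun r x => f x (m r)) l y ∂μ.map fun ω u => X u ω := by
    intro l
    rw [lintegral_map measurable_hitProduct hX, ← lintegral_indicator]
    · simp only [hitProduct, hτX]
      rfl
    · simp only [hτX]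
      exact hX (measurableSet_hittingTime_eq_succ n)
  rw [hlaw, hlaw]
  exact lintegral_hitProduct_antitone (hindep.map_comp_perm hmeas hdist)
    (fun r => hf0 (m r) (hm r)) hi_mono hj_mono (fun r => (mem_Icc.1 (hj_range r)).1)
    (fun r => (mem_Icc.1 (hi_range r)).2.trans n.le_succ) hji

/-- Monotonicity of products along the Poisson walk conditioned to hit `−1` at time
`n+1`: if `f(0, m) = 0`, `i_1 < … < i_k`, `j_1 < … < j_k` with `j_r ≤ i_r`, and
`m_r ≥ 1`, then
`E[f(X_{i_1},m_1) ⋯ f(X_{i_k},m_k) 1_{τ_{−1}=n+1}] ≤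
 E[f(X_{j_1},m_1) ⋯ f(X_{j_k},m_k) 1_{τ_{−1}=n+1}]`
(expectations written as lower Lebesgue integrals of the nonnegative integrands). -/
theorem conditioned_walk_step_decrease
    {Ω : Type*} [MeasurableSpace Ω] (μ : Measure Ω) [IsProbabilityMeasure μ]
    (X : ℕ → Ω → ℕ) (hmeas : ∀ i, Measurable (X i))
    (hindep : iIndepFun X μ)
    (hdist : ∀ i, Measure.map (X i) μ = poissonMeasure 1)
    (S : ℕ → Ω → ℤ) (hS : ∀ m ω, S m ω = ∑ j ∈ Finset.Icc 1 m, ((X j ω : ℤ) - 1))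
    (τ : Ω → ℕ) (hτ : ∀ ω, τ ω = sInf {m | 1 ≤ m ∧ S m ω = -1})
    (f : ℕ → ℕ → ℝ) (hf0 : ∀ m, 1 ≤ m → f 0 m = 0) (hfpos : ∀ x m, 0 ≤ f x m)
    (n k : ℕ) (hn : 1 ≤ n) (hk : 1 ≤ k)
    (i j : Fin k → ℕ) (hi_mono : StrictMono i) (hj_mono : StrictMono j)
    (hi_range : ∀ r, i r ∈ Finset.Icc 1 n) (hj_range : ∀ r, j r ∈ Finset.Icc 1 n)
    (hji : ∀ r, j r ≤ i r)
    (m : Fin k → ℕ) (hm : ∀ r, 1 ≤ m r) :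
    ∫⁻ ω in {ω | τ ω = n + 1}, ENNReal.ofReal (∏ r, f (X (i r) ω) (m r)) ∂μ ≤
      ∫⁻ ω in {ω | τ ω = n + 1}, ENNReal.ofReal (∏ r, f (X (j r) ω) (m r)) ∂μ :=
  conditioned_walk_step_decrease_general μ X hmeas hindep hdist S hS τ hτ f hf0 n k i j hi_mono
    hj_mono hi_range hj_range hji m hm
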